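/- Let g: Z → Z' be a PQ-symmetric homeomorphism between metric spaces such that both g and g⁻¹ are uniformly continuous. If Z is uniformly perfect, then Z' is uniformly perfect. -/
import Mathlib


namespace TreePaper

/-- A metric space is uniformly perfect if it is `S`-uniformly perfect for some `S > 1`. -/
def UniformlyPerfect (X : Type*) [MetricSpace X] : Prop :=
  ∃ S : ℝ, 1 < S ∧ ∃ ε₀ : ℝ, 0 < ε₀ ∧ ∀ x : X, ∀ ε : ℝ, 0 < ε → ε ≤ ε₀ →
    ∃ y : X, ε / S < dist x y ∧ dist x y ≤ ε

/-- If `g : Z → Z'` is a PQ-symmetric homeomorphism (with control function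
`η(t) = q max {t^p, t^(1/p)}`, `p,q ≥ 1`) such that `g` and `g⁻¹` are uniformly continuous,
and `Z` is uniformly perfect, then `Z'` is uniformly perfect. -/
theorem uniformlyPerfect_of_PQsymmetric {Z Z' : Type*} [MetricSpace Z] [MetricSpace Z']
    (g : Z ≃ₜ Z') (hg : UniformContinuous g) (hg' : UniformContinuous g.symm)
    (hnc : ∃ a b : Z, g a ≠ g b)
    (p q : ℝ) (hp : 1 ≤ p) (hq : 1 ≤ q)
    (hpq : ∀ x a b : Z, ∀ t : ℝ, 0 ≤ t → dist x a ≤ t * dist x b →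
      dist (g x) (g a) ≤ q * max (t ^ p) (t ^ (1 / p)) * dist (g x) (g b))
    (hZ : UniformlyPerfect Z) :
    UniformlyPerfect Z' := by
  obtain ⟨S, hS, ε₀, hε₀, hZP⟩ := hZ
  have hS0 : (0:ℝ) < S := lt_trans one_pos hS
  set K : ℝ := q * max ((S^2) ^ p) ((S^2) ^ (1/p)) with hKdef
  have hK0 : 0 < K := mul_pos (lt_of_lt_of_le one_pos hq)
    (lt_max_of_lt_left (Real.rpow_pos_of_pos (by positivity) p))
  rw [Metric.uniformContinuous_iff] at hg hg'
  obtain ⟨c, hc0, hc⟩ := hg' (ε₀ / S) (by positivity)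
  refine ⟨K + 1, by linarith, c, hc0, ?_⟩
  intro x' ε hε hεc
  set x := g.symm x' with hxdef
  have hgx : g x = x' := g.apply_symm_apply x'
  have hsel : ∀ k : ℕ, ∃ y : Z, ε₀ / S ^ k / S < dist x y ∧ dist x y ≤ ε₀ / S ^ k := by
    intro k
    refine hZP x (ε₀ / S ^ k) (by positivity) ?_
    have h1 : (1:ℝ) ≤ S ^ k := one_le_pow₀ hS.le
    calc ε₀ / S ^ k ≤ ε₀ / 1 := by
          apply div_le_div_of_nonneg_left hε₀.le one_pos h1
      _ = ε₀ := div_one _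
  choose y hy1 hy2 using hsel
  -- positivity of image distances
  have hpos : ∀ k : ℕ, 0 < dist x' (g (y k)) := by
    intro k
    rw [← hgx, dist_pos]
    intro h
    have hxy : x = y k := g.injective h
    have h1 := hy1 k
    rw [← hxy, dist_self] at h1
    have h2 : (0:ℝ) < ε₀ / S ^ k / S := by positivity
    linarith
  -- lower bound at scale 0
  have hd0 : c ≤ dist x' (g (y 0)) := by
    by_contra h
    push_neg at h
    have h2 := hc h
    rw [g.symm_apply_apply, ← hxdef] at h2
    have h3 := hy1 0
    simp only [pow_zero, div_one] at h3
    linarith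
  -- consecutive ratio bound
  have hstep : ∀ k : ℕ, dist x' (g (y k)) ≤ K * dist x' (g (y (k+1))) := by
    intro k
    rw [← hgx]
    refine hpq x (y k) (y (k+1)) (S^2) (by positivity) ?_
    have h1 : dist x (y k) ≤ ε₀ / S ^ k := hy2 k
    have h2 : ε₀ / S ^ (k+1) / S < dist x (y (k+1)) := hy1 (k+1)
    have heq : ε₀ / S ^ k = S ^ 2 * (ε₀ / S ^ (k+1) / S) := by
      field_simp
      ring
    have h3 : S ^ 2 * (ε₀ / S ^ (k+1) / S) ≤ S ^ 2 * dist x (y (k+1)) :=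
      mul_le_mul_of_nonneg_left h2.le (by positivity)
    linarith
  -- some term gets below ε
  have hsmall : ∃ n : ℕ, dist x' (g (y n)) ≤ ε := by
    obtain ⟨δ, hδ0, hδ⟩ := hg ε hε
    obtain ⟨n, hn⟩ := pow_unbounded_of_one_lt (ε₀ / δ) hS
    refine ⟨n, le_of_lt ?_⟩
    rw [← hgx]
    apply hδ
    have h1 : dist x (y n) ≤ ε₀ / S ^ n := hy2 n
    have h2 : ε₀ / S ^ n < δ := by
      rw [div_lt_iff₀ (by positivity)]
      rw [div_lt_iff₀ hδ0] at hn
      linarith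
    linarith
  set N := Nat.find hsmall with hNdef
  have hN : dist x' (g (y N)) ≤ ε := Nat.find_spec hsmall
  refine ⟨g (y N), ?_, hN⟩
  rcases Nat.eq_zero_or_pos N with h0 | hNpos
  · have : ε / (K + 1) < ε := div_lt_self hε (by linarith)
    have := hd0
    rw [← h0] at this
    linarith [div_lt_self hε (show (1:ℝ) < K + 1 by linarith)]
  · obtain ⟨m, hm⟩ : ∃ m, N = m + 1 := ⟨N - 1, (Nat.succ_pred_eq_of_pos hNpos).symm⟩
    have hmlt : m < N := by omega
    have hmbig : ε < dist x' (g (y m)) := by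
      have := Nat.find_min hsmall hmlt
      push_neg at this
      exact this
    have hkm : dist x' (g (y m)) ≤ K * dist x' (g (y N)) := by
      rw [hm]; exact hstep m
    rw [div_lt_iff₀ (by linarith : (0:ℝ) < K + 1)]
    nlinarith [hpos N]

end TreePaper
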